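/- arXiv:0905.2558 — 2 statements merged into one kernel-verified Lean document; each statement's English description precedes it below -/
import Mathlib

section
/- Let M be a bounded linear operator on a complex Hilbert space H. Assume: (i) there is a dense subset C of H such that for every pair of vectors φ, ψ ∈ C one has sup_{n ∈ ℕ} |⟨φ, Mⁿ ψ⟩| < ∞; (ii) there are a real number α > 0, complex numbers α₁, …, α_N each of modulus |α_j| = α, nonzero bounded idempotent operators P₁, …, P_N with P_j P_k = 0 for j ≠ k, and bounded nilpotent operators D₁, …, D_N with P_j D_j = D_j P_j = D_j, such that, setting Q = 1 − Σ_{j=1}^N P_j, one has M = Σ_{j=1}^N (α_j P_j + D_j) + Q M Q; (iii) there exists β < log α such that ‖(QMQ)ⁿ‖ ≤ e^{βn} for all n ≥ 1. If in addition D_{j₀} ≠ 0 for some index j₀, then α < 1. (Equivalently: if α = 1, all the eigennilpotents D_j vanish, i.e. the peripheral eigenvalues are semisimple.) -/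
/-!
Suppose `α ≥ 1`, and let `r ≥ 1` be the largest exponent with `D j ^ r ≠ 0` for some `j`.
On the range of `P j` the operator `M` acts as `a j + D j`, so the binomial formula gives
`‖M ^ n‖ = O(n ^ r * α ^ n)` (the remainder `(Q M Q) ^ n` decays faster) and
`(n ^ r * a j ^ n)⁻¹ • M ^ n * P j → (r! * a j ^ r)⁻¹ • D j ^ r ≠ 0`.
The normalised powers are thus uniformly bounded, and their matrix elements tend to `0` on the
dense set `C`, since those of `M ^ n` stay bounded there while `n ^ r * α ^ n → ∞`.
By equicontinuity they tend to `0` everywhere, which forces `D j ^ r = 0`.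
-/

open Filter Topology Asymptotics Finset

theorem exists_pow_succ_eq_zero_and_pow_ne_zero {ι A : Type*} [Finite ι] [MonoidWithZero A]
    {D : ι → A} (hD : ∀ j, IsNilpotent (D j)) (hD0 : ∃ j, D j ≠ 0) :
    ∃ r, 0 < r ∧ (∀ j, D j ^ (r + 1) = 0) ∧ ∃ j, D j ^ r ≠ 0 := by
  classical
  choose m hm using hD
  obtain ⟨N, hN⟩ := Finite.exists_le m
  have hex : ∃ r, ∀ j, D j ^ (r + 1) = 0 := ⟨N, fun j => pow_eq_zero_of_le (by grind) (hm j)⟩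
  have hpos : 0 < Nat.find hex := by
    obtain ⟨j, hj⟩ := hD0
    exact Nat.pos_of_ne_zero fun h => hj (by simpa [h] using Nat.find_spec hex j)
  refine ⟨Nat.find hex, hpos, Nat.find_spec hex, ?_⟩
  simpa [Nat.sub_add_cancel hpos] using Nat.find_min hex (Nat.sub_one_lt hpos.ne')

theorem add_pow_eq_sum_of_pow_succ_eq_zero {R A : Type*} [CommSemiring R] [Ring A] [Algebra R A]
    (c : R) {d : A} {r : ℕ} (hd : d ^ (r + 1) = 0) (n : ℕ) :
    (algebraMap R A c + d) ^ n = ∑ k ∈ range (r + 1), (n.choose k * c ^ (n - k)) • d ^ k := by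
  rw [add_comm, (Algebra.commute_algebraMap_right c d).add_pow]
  calc _ = ∑ k ∈ range (n + 1), (n.choose k * c ^ (n - k)) • d ^ k := by
        refine sum_congr rfl fun k _ => ?_
        rw [Algebra.smul_def, Algebra.commutes, map_mul, map_natCast, map_pow,
          (Nat.cast_commute _ _).eq, mul_assoc]
    _ = ∑ k ∈ range (n + r + 1), (n.choose k * c ^ (n - k)) • d ^ k :=
        sum_subset (range_subset_range.2 (by omega)) fun k _ hk => by
          simp [Nat.choose_eq_zero_of_lt (not_lt.1 (mt mem_range.2 hk))]
    _ = _ := (sum_subset (range_subset_range.2 (by omega)) fun k _ hk => by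
          simp [pow_eq_zero_of_le (not_lt.1 (mt mem_range.2 hk)) hd]).symm

section BlockDecomposition

variable {R A ι : Type*} [CommSemiring R] [Ring A] [Algebra R A] [Fintype ι]

structure IsBlockDecomposition (M Q : A) (a : ι → R) (P D : ι → A) : Prop where
  idempotents : OrthogonalIdempotents P
  proj_mul : ∀ j, P j * D j = D j
  mul_proj : ∀ j, D j * P j = D j
  compl_eq : Q = 1 - ∑ j, P j
  eq : M = ∑ j, (a j • P j + D j) + Q * M * Q

namespace IsBlockDecomposition

variable {M Q : A} {a : ι → R} {P D : ι → A} (h : IsBlockDecomposition M Q a P D)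
include h

theorem compl_mul_proj (j : ι) : Q * P j = 0 := by
  classical
  simp [h.compl_eq, sub_mul, sum_mul, h.idempotents.mul_eq]

theorem proj_mul_compl (j : ι) : P j * Q = 0 := by
  rw [h.compl_eq, mul_sub, mul_one, h.idempotents.mul_sum_of_mem (mem_univ j), sub_self]

theorem compl_mul_compl : Q * Q = Q := by
  rw [h.compl_eq]
  exact h.idempotents.isIdempotentElem_sum.one_sub.eq

theorem semiconjBy_proj (j : ι) : SemiconjBy (P j) (algebraMap R A (a j) + D j) M := by
  have hP := h.idempotents
  have hblock : ∀ k ≠ j, (a k • P k + D k) * P j = 0 := fun k hk => by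
    rw [add_mul, smul_mul_assoc, hP.ortho hk, ← h.mul_proj k, mul_assoc, hP.ortho hk, smul_zero,
      mul_zero, add_zero]
  rw [SemiconjBy, mul_add, h.proj_mul, ← Algebra.commutes, ← Algebra.smul_def, h.eq, add_mul,
    sum_mul, sum_eq_single j (fun k _ => hblock k) (by simp), mul_assoc, h.compl_mul_proj,
    mul_zero, add_zero, add_mul, smul_mul_assoc, (hP.idem j).eq, h.mul_proj]

theorem semiconjBy_compl : SemiconjBy Q (Q * M * Q) M := by
  have hblock : ∀ k, (a k • P k + D k) * Q = 0 := fun k => by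
    rw [add_mul, smul_mul_assoc, h.proj_mul_compl, ← h.mul_proj k, mul_assoc, h.proj_mul_compl,
      smul_zero, mul_zero, add_zero]
  rw [SemiconjBy, ← mul_assoc, ← mul_assoc, h.compl_mul_compl]
  conv_rhs => rw [h.eq, add_mul, sum_mul, sum_eq_zero fun k _ => hblock k, zero_add, mul_assoc,
    h.compl_mul_compl]

theorem pow_eq (n : ℕ) :
    M ^ n = ∑ j, P j * (algebraMap R A (a j) + D j) ^ n + Q * (Q * M * Q) ^ n := by
  calc M ^ n = M ^ n * (∑ j, P j + Q) := by rw [h.compl_eq, add_sub_cancel, mul_one]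
    _ = _ := by
      simp only [mul_add, mul_sum, ← ((h.semiconjBy_proj _).pow_right n).eq,
        ← (h.semiconjBy_compl.pow_right n).eq]

end IsBlockDecomposition

end BlockDecomposition

theorem tendsto_choose_div_pow_self (r : ℕ) :
    Tendsto (fun n : ℕ => (n.choose r : ℝ) / n ^ r) atTop (𝓝 (r.factorial : ℝ)⁻¹) := by
  refine ((isEquivalent_choose r).div IsEquivalent.refl).symm.tendsto_nhds
    (tendsto_const_nhds.congr' ?_)
  filter_upwards [eventually_gt_atTop 0] with n hn
  simp only [Pi.div_apply]
  field_simp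

theorem tendsto_choose_div_pow_of_lt {k r : ℕ} (hkr : k < r) :
    Tendsto (fun n : ℕ => (n.choose k : ℝ) / n ^ r) atTop (𝓝 0) :=
  ((isTheta_choose k).isBigO.trans_isLittleO ((isLittleO_pow_pow_atTop_of_lt hkr).comp_tendsto
    tendsto_natCast_atTop_atTop)).tendsto_div_nhds_zero

theorem tendsto_inv_smul_algebraMap_add_pow {𝕜 A : Type*} [RCLike 𝕜] [NormedRing A]
    [NormedAlgebra 𝕜 A] {c : 𝕜} (hc : c ≠ 0) {d : A} {r : ℕ} (hd : d ^ (r + 1) = 0) :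
    Tendsto (fun n : ℕ => ((n : 𝕜) ^ r * c ^ n)⁻¹ • (algebraMap 𝕜 A c + d) ^ n) atTop
      (𝓝 (((r.factorial : 𝕜) * c ^ r)⁻¹ • d ^ r)) := by
  have hexp : ∀ n : ℕ, ((n : 𝕜) ^ r * c ^ n)⁻¹ • (algebraMap 𝕜 A c + d) ^ n =
      ∑ k ∈ range (r + 1), (((n.choose k : ℝ) / n ^ r : ℝ) : 𝕜) • ((c ^ k)⁻¹ • d ^ k) := by
    intro n
    rw [add_pow_eq_sum_of_pow_succ_eq_zero c hd, smul_sum]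
    refine sum_congr rfl fun k _ => ?_
    rw [smul_smul, smul_smul]
    congr 1
    rcases le_or_gt k n with hkn | hkn
    · rw [← pow_sub_mul_pow c hkn]; push_cast; field_simp
    · simp [Nat.choose_eq_zero_of_lt hkn]
  have hlim : ((r.factorial : 𝕜) * c ^ r)⁻¹ • d ^ r
      = ∑ k ∈ range r, ((0 : ℝ) : 𝕜) • ((c ^ k)⁻¹ • d ^ k)
        + (((r.factorial : ℝ)⁻¹ : ℝ) : 𝕜) • ((c ^ r)⁻¹ • d ^ r) := by
    simp [smul_smul, mul_comm]
  simp_rw [hexp, sum_range_succ, hlim]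
  have hofReal := RCLike.continuous_ofReal (K := 𝕜)
  refine (tendsto_finsetSum _ fun k hk => ?_).add ?_
  · exact ((hofReal.tendsto _).comp (tendsto_choose_div_pow_of_lt (mem_range.1 hk))).smul_const _
  · exact ((hofReal.tendsto _).comp (tendsto_choose_div_pow_self r)).smul_const _

theorem tendsto_inv_smul_pow_mul_of_semiconjBy {𝕜 A : Type*} [RCLike 𝕜] [NormedRing A]
    [NormedAlgebra 𝕜 A] {m p d : A} {c : 𝕜} (h : SemiconjBy p (algebraMap 𝕜 A c + d) m)
    (hpd : p * d = d) (hc : c ≠ 0) {r : ℕ} (hr : 0 < r) (hd : d ^ (r + 1) = 0) :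
    Tendsto (fun n : ℕ => ((n : 𝕜) ^ r * c ^ n)⁻¹ • m ^ n * p) atTop
      (𝓝 (((r.factorial : 𝕜) * c ^ r)⁻¹ • d ^ r)) := by
  have hpdr : p * d ^ r = d ^ r := by
    rw [← Nat.sub_add_cancel hr, pow_succ', ← mul_assoc, hpd]
  have hlim := (tendsto_inv_smul_algebraMap_add_pow hc hd).const_mul p
  rw [mul_smul_comm, hpdr] at hlim
  refine hlim.congr fun n => ?_
  rw [smul_mul_assoc, ← (h.pow_right n).eq, mul_smul_comm]

theorem isBigO_algebraMap_add_pow {𝕜 A : Type*} [RCLike 𝕜] [NormedRing A] [NormedAlgebra 𝕜 A]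
    {c : 𝕜} (hc : 1 ≤ ‖c‖) {d : A} {r : ℕ} (hd : d ^ (r + 1) = 0) :
    (fun n : ℕ => (algebraMap 𝕜 A c + d) ^ n) =O[atTop] fun n => (n : ℝ) ^ r * ‖c‖ ^ n := by
  simp_rw [add_pow_eq_sum_of_pow_succ_eq_zero c hd]
  refine IsBigO.fun_sum fun k hk => IsBigO.of_bound ‖d ^ k‖ ?_
  filter_upwards [eventually_ge_atTop 1] with n hn
  have hchoose : (n.choose k : ℝ) ≤ (n : ℝ) ^ r := by
    exact_mod_cast (n.choose_le_pow k).trans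
      (Nat.pow_le_pow_right hn (Nat.lt_succ_iff.1 (mem_range.1 hk)))
  have hpow : ‖c‖ ^ (n - k) ≤ ‖c‖ ^ n := pow_le_pow_right₀ hc (Nat.sub_le n k)
  rw [norm_smul, norm_mul, norm_pow, RCLike.norm_natCast, Real.norm_of_nonneg (by positivity),
    mul_comm ‖d ^ k‖]
  gcongr

theorem isBigO_pow_of_norm_pow_le_exp {A : Type*} [NormedRing A] {x : A} {α β : ℝ}
    (hα : 0 < α) (hβ : β < Real.log α) (h : ∀ n : ℕ, 1 ≤ n → ‖x ^ n‖ ≤ Real.exp (β * n)) :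
    (fun n : ℕ => x ^ n) =O[atTop] fun n => α ^ n := by
  refine IsBigO.of_bound 1 ?_
  filter_upwards [eventually_ge_atTop 1] with n hn
  rw [one_mul, Real.norm_of_nonneg (by positivity)]
  calc ‖x ^ n‖ ≤ Real.exp β ^ n := by rw [← Real.exp_nat_mul, mul_comm]; exact h n hn
    _ ≤ α ^ n := by gcongr; exact ((Real.lt_log_iff_exp_lt hα).1 hβ).le

theorem IsBlockDecomposition.isBigO_pow {𝕜 A ι : Type*} [RCLike 𝕜] [NormedRing A]
    [NormedAlgebra 𝕜 A] [Fintype ι] {M Q : A} {a : ι → 𝕜} {P D : ι → A}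
    (h : IsBlockDecomposition M Q a P D) {α : ℝ} (ha : ∀ j, ‖a j‖ = α) (hα : 1 ≤ α) {r : ℕ}
    (hD : ∀ j, D j ^ (r + 1) = 0) (hR : (fun n : ℕ => (Q * M * Q) ^ n) =O[atTop] fun n => α ^ n) :
    (fun n : ℕ => M ^ n) =O[atTop] fun n => (n : ℝ) ^ r * α ^ n := by
  have hblock : ∀ j, (fun n : ℕ => (algebraMap 𝕜 A (a j) + D j) ^ n) =O[atTop]
      fun n => (n : ℝ) ^ r * α ^ n := fun j => by
    have hj := isBigO_algebraMap_add_pow (c := a j) (by rwa [ha j]) (hD j)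
    rwa [ha j] at hj
  have hαn : (fun n : ℕ => α ^ n) =O[atTop] fun n => (n : ℝ) ^ r * α ^ n := by
    refine IsBigO.of_bound 1 ?_
    filter_upwards [eventually_ge_atTop 1] with n hn
    rw [one_mul, Real.norm_of_nonneg (by positivity), Real.norm_of_nonneg (by positivity)]
    exact le_mul_of_one_le_left (by positivity) (one_le_pow₀ (by exact_mod_cast hn))
  refine IsBigO.congr_left ?_ fun n => (h.pow_eq n).symm
  exact (IsBigO.fun_sum fun j _ => (hblock j).const_mul_left (P j)).add
    ((hR.trans hαn).const_mul_left Q)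

theorem tendsto_zero_of_dense_of_norm_le {ι 𝕜 𝕜₂ E F : Type*} [NontriviallyNormedField 𝕜]
    [NontriviallyNormedField 𝕜₂] {σ : 𝕜 →+* 𝕜₂} [RingHomIsometric σ] [SeminormedAddCommGroup E]
    [SeminormedAddCommGroup F] [NormedSpace 𝕜 E] [NormedSpace 𝕜₂ F] {f : ι → E →SL[σ] F}
    (hf : ∃ C, ∀ i x, ‖f i x‖ ≤ C * ‖x‖) {l : Filter ι} {s : Set E} (hs : Dense s)
    (h : ∀ x ∈ s, Tendsto (f · x) l (𝓝 0)) (x : E) : Tendsto (f · x) l (𝓝 0) := by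
  have hequi : Equicontinuous ((↑) ∘ f) := ((NormedSpace.equicontinuous_TFAE f).out 3 1).mp hf
  exact (hequi x).tendsto_of_mem_closure tendsto_const_nhds h (hs.closure_eq ▸ Set.mem_univ x)

theorem tendsto_inner_zero_of_dense {ι 𝕜 E : Type*} [RCLike 𝕜] [SeminormedAddCommGroup E]
    [InnerProductSpace 𝕜 E] {T : ι → E →L[𝕜] E} (hT : ∃ K, ∀ i, ‖T i‖ ≤ K)
    {l : Filter ι} {s : Set E} (hs : Dense s)
    (h : ∀ φ ∈ s, ∀ ψ ∈ s, Tendsto (fun i => inner 𝕜 φ (T i ψ)) l (𝓝 0)) (φ ψ : E) :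
    Tendsto (fun i => inner 𝕜 φ (T i ψ)) l (𝓝 0) := by
  obtain ⟨K, hK⟩ := hT
  have hTK : ∀ i x, ‖T i x‖ ≤ K * ‖x‖ := fun i x =>
    ((T i).le_opNorm x).trans (mul_le_mul_of_nonneg_right (hK i) (norm_nonneg x))
  have hleft : ∀ φ ∈ s, ∀ ψ, Tendsto (fun i => inner 𝕜 φ (T i ψ)) l (𝓝 0) := fun φ hφ =>
    tendsto_zero_of_dense_of_norm_le (f := fun i => (innerSL 𝕜 φ).comp (T i))
      ⟨‖φ‖ * K, fun i x => (norm_inner_le_norm _ _).trans <| by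
        rw [mul_assoc]; exact mul_le_mul_of_nonneg_left (hTK i x) (norm_nonneg φ)⟩ hs (h φ hφ)
  exact tendsto_zero_of_dense_of_norm_le (f := fun i => innerSLFlip 𝕜 (T i ψ))
    ⟨K * ‖ψ‖, fun i x => (norm_inner_le_norm _ _).trans <| by
      rw [mul_comm]; exact mul_le_mul_of_nonneg_right (hTK i ψ) (norm_nonneg x)⟩
    hs (fun φ hφ => hleft φ hφ ψ) φ

theorem exists_norm_inv_smul_le_of_isBigO {𝕜 E : Type*} [NormedField 𝕜]
    [SeminormedAddCommGroup E] [NormedSpace 𝕜 E] {f : ℕ → E} {g : ℕ → 𝕜} (h : f =O[atTop] g) :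
    ∃ K, ∀ n, ‖(g n)⁻¹ • f n‖ ≤ K := by
  obtain ⟨c, hc, hcO⟩ := h.exists_pos
  have hbdd : IsBoundedUnder (· ≤ ·) atTop fun n => ‖(g n)⁻¹ • f n‖ := by
    refine ⟨c, eventually_map.2 (hcO.bound.mono fun n hn => ?_)⟩
    rw [norm_smul, norm_inv]
    rcases (norm_nonneg (g n)).eq_or_lt with h0 | hpos
    · simp [← h0, hc.le]
    · rwa [inv_mul_le_iff₀ hpos, mul_comm]
  obtain ⟨K, hK⟩ := hbdd.bddAbove_range
  exact ⟨K, fun n => hK (Set.mem_range_self n)⟩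

theorem eq_zero_of_tendsto_inv_smul_pow_mul {𝕜 E : Type*} [RCLike 𝕜] [NormedAddCommGroup E]
    [InnerProductSpace 𝕜 E] {M p L : E →L[𝕜] E} {s : Set E} (hs : Dense s)
    (hbdd : ∀ φ ∈ s, ∀ ψ ∈ s, ∃ B : ℝ, ∀ n : ℕ, ‖inner 𝕜 φ ((M ^ n) ψ)‖ ≤ B)
    {g : ℕ → 𝕜} (hg : Tendsto (‖g ·‖) atTop atTop) (hO : (fun n => M ^ n) =O[atTop] g)
    (hL : Tendsto (fun n => (g n)⁻¹ • M ^ n * p) atTop (𝓝 L)) : L = 0 := by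
  have hs0 : ∀ φ ∈ s, ∀ ψ ∈ s,
      Tendsto (fun n => inner 𝕜 φ (((g n)⁻¹ • M ^ n) ψ)) atTop (𝓝 0) := by
    intro φ hφ ψ hψ
    obtain ⟨B, hB⟩ := hbdd φ hφ ψ hψ
    simp only [smul_apply, inner_smul_right]
    have hinv := tendsto_inv₀_cobounded.comp (tendsto_norm_atTop_iff_cobounded.1 hg)
    exact hinv.zero_mul_isBoundedUnder_le ⟨B, eventually_map.2 (Eventually.of_forall hB)⟩
  refine ContinuousLinearMap.ext fun ψ => ext_inner_left 𝕜 fun φ => ?_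
  rw [zero_apply, inner_zero_right]
  exact tendsto_nhds_unique
    (tendsto_const_nhds.inner (((continuous_eval_const ψ).tendsto L).comp hL))
    (tendsto_inner_zero_of_dense (exists_norm_inv_smul_le_of_isBigO hO) hs hs0 φ (p ψ))

theorem spectral_radius_lt_one_of_nonzero_nilpotent_general
    {H : Type*} [NormedAddCommGroup H] [InnerProductSpace ℂ H]
    (M : H →L[ℂ] H)
    (C : Set H) (hC : Dense C)
    (hbdd : ∀ φ ∈ C, ∀ ψ ∈ C,
      ∃ B : ℝ, ∀ n : ℕ, ‖(inner ℂ φ ((M ^ n) ψ) : ℂ)‖ ≤ B)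
    (α : ℝ) (N : ℕ)
    (a : Fin N → ℂ) (ha : ∀ j, ‖a j‖ = α)
    (P : Fin N → (H →L[ℂ] H))
    (hPidem : ∀ j, P j * P j = P j)
    (hPorth : ∀ j k, j ≠ k → P j * P k = 0)
    (D : Fin N → (H →L[ℂ] H))
    (hDnil : ∀ j, ∃ m : ℕ, 1 ≤ m ∧ (D j) ^ m = 0)
    (hPD : ∀ j, P j * D j = D j) (hDP : ∀ j, D j * P j = D j)
    (Q : H →L[ℂ] H) (hQ : Q = 1 - ∑ j, P j)
    (hM : M = (∑ j, (a j • P j + D j)) + Q * M * Q)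
    (hβ : ∃ β : ℝ, β < Real.log α ∧
      ∀ n : ℕ, 1 ≤ n → ‖(Q * M * Q) ^ n‖ ≤ Real.exp (β * n))
    (hD0 : ∃ j₀, D j₀ ≠ 0) :
    α < 1 := by
  by_contra! hα
  obtain ⟨β, hβ, hR⟩ := hβ
  obtain ⟨r, hr, hDr, j, hj⟩ :=
    exists_pow_succ_eq_zero_and_pow_ne_zero (fun j => (hDnil j).imp fun _ hm => hm.2) hD0
  have hdec : IsBlockDecomposition M Q a P D := ⟨⟨hPidem, hPorth⟩, hPD, hDP, hQ, hM⟩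
  have ha0 : a j ≠ 0 := norm_ne_zero_iff.1 (by linarith [ha j])
  have hg : ∀ n : ℕ, ‖(n : ℂ) ^ r * a j ^ n‖ = (n : ℝ) ^ r * α ^ n := by simp [ha j]
  have hgrowth : Tendsto (fun n : ℕ => (n : ℝ) ^ r * α ^ n) atTop atTop := by
    refine tendsto_atTop_mono (fun n => ?_) tendsto_natCast_atTop_atTop
    calc (n : ℝ) ≤ (n : ℝ) ^ r := by exact_mod_cast Nat.le_self_pow hr.ne' n
      _ ≤ (n : ℝ) ^ r * α ^ n := le_mul_of_one_le_right (by positivity) (one_le_pow₀ hα)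
  have hO := hdec.isBigO_pow ha hα hDr (isBigO_pow_of_norm_pow_le_exp (by linarith) hβ hR)
  have hzero := eq_zero_of_tendsto_inv_smul_pow_mul hC hbdd (g := fun n => (n : ℂ) ^ r * a j ^ n)
    (by simpa only [hg] using hgrowth) (by rw [← isBigO_norm_right]; simpa only [hg] using hO)
    (tendsto_inv_smul_pow_mul_of_semiconjBy (hdec.semiconjBy_proj j) (hPD j) ha0 hr (hDr j))
  exact hj ((smul_eq_zero.1 hzero).resolve_left (by simp [ha0, Nat.factorial_ne_zero]))

/-- Semisimplicity part of Proposition A.3.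
If the matrix elements of the powers of `M` are uniformly bounded on a dense set,
and `M` admits a peripheral spectral decomposition
`M = ∑ j (αⱼ Pⱼ + Dⱼ) + Q M Q` where the `αⱼ` all have modulus `α > 0`,
the `Pⱼ` are nonzero mutually orthogonal idempotents, the `Dⱼ` are nilpotents
attached to the blocks, and the remainder `Q M Q` has norm decay
`‖(QMQ)ⁿ‖ ≤ e^{βn}` with `β < log α`, and if moreover some eigennilpotent
`D_{j₀}` is nonzero, then `α < 1` (i.e. peripheral eigenvalues of modulus `1`
are semisimple). -/
theorem spectral_radius_lt_one_of_nonzero_nilpotent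
    {H : Type*} [NormedAddCommGroup H] [InnerProductSpace ℂ H] [CompleteSpace H]
    (M : H →L[ℂ] H)
    (C : Set H) (hC : Dense C)
    (hbdd : ∀ φ ∈ C, ∀ ψ ∈ C,
      ∃ B : ℝ, ∀ n : ℕ, ‖(inner ℂ φ ((M ^ n) ψ) : ℂ)‖ ≤ B)
    (α : ℝ) (hα : 0 < α) (N : ℕ)
    (a : Fin N → ℂ) (ha : ∀ j, ‖a j‖ = α)
    (P : Fin N → (H →L[ℂ] H))
    (hPne : ∀ j, P j ≠ 0)
    (hPidem : ∀ j, P j * P j = P j)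
    (hPorth : ∀ j k, j ≠ k → P j * P k = 0)
    (D : Fin N → (H →L[ℂ] H))
    (hDnil : ∀ j, ∃ m : ℕ, 1 ≤ m ∧ (D j) ^ m = 0)
    (hPD : ∀ j, P j * D j = D j) (hDP : ∀ j, D j * P j = D j)
    (Q : H →L[ℂ] H) (hQ : Q = 1 - ∑ j, P j)
    (hM : M = (∑ j, (a j • P j + D j)) + Q * M * Q)
    (hβ : ∃ β : ℝ, β < Real.log α ∧
      ∀ n : ℕ, 1 ≤ n → ‖(Q * M * Q) ^ n‖ ≤ Real.exp (β * n))
    (hD0 : ∃ j₀, D j₀ ≠ 0) :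
    α < 1 :=
  spectral_radius_lt_one_of_nonzero_nilpotent_general M C hC hbdd α N a ha P hPidem hPorth D hDnil
    hPD hDP Q hQ hM hβ hD0
end

section
/- Let N be a bounded normal operator on a complex Hilbert space whose spectrum satisfies σ(N) ⊆ { z : |z| = 1 } ∪ { z : |z| ≤ r } for some 0 ≤ r < 1, and let S be a bounded operator with ‖S‖ < (1 − r)/4. Then the spectrum of N + S splits into two disjoint parts: σ(N + S) = σ⁽⁰⁾ ∪ σ⁽¹⁾ with σ⁽⁰⁾ ∩ σ⁽¹⁾ = ∅, where σ⁽⁰⁾ ⊆ { z : 1 − (1 − r)/4 < |z| < 1 + (1 − r)/4 } and σ⁽¹⁾ ⊆ { z : |z| < r + (1 − r)/4 }; moreover the two localization regions themselves are disjoint. -/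
/-!
For a normal element `a` of a C⋆-algebra the resolvent at `z` is `cfc (fun x ↦ (z - x)⁻¹) a`, so
the isometric functional calculus bounds its norm by `1 / dist(z, σ a)`. A Neumann-series
perturbation then puts `σ (a + s)` inside the `‖s‖`-neighbourhood of `σ a` (Bauer–Fike for normal
operators). With `ε = (1 - r) / 4`, the `ε`-neighbourhood of the unit circle lies in the annulus and
that of the disk of radius `r` in the disk of radius `r + ε`; these are disjoint as `2ε < 1 - r`.
-/

open Metric

section NormalPerturbation

variable {A : Type*} [CStarAlgebra A]

lemma cfc_const_sub_id (a : A) [IsStarNormal a] (z : ℂ) :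
    cfc (fun x : ℂ ↦ z - x) a = algebraMap ℂ A z - a := by
  rw [cfc_sub _ _, cfc_const z a, cfc_id' ℂ a]

lemma norm_resolvent_le {a : A} [IsStarNormal a] {z : ℂ} {ε : ℝ} (hε : 0 < ε)
    (hz : ∀ μ ∈ spectrum ℂ a, ε ≤ ‖z - μ‖) : ‖resolvent a z‖ ≤ ε⁻¹ := by
  have hne : ∀ μ ∈ spectrum ℂ a, z - μ ≠ 0 := fun μ hμ h ↦ by
    simpa [h] using hε.trans_le (hz μ hμ)
  rw [resolvent, ← cfc_const_sub_id, ← cfc_inv (fun x ↦ z - x) a hne]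
  refine norm_cfc_le (inv_nonneg.2 hε.le) fun μ hμ ↦ ?_
  rw [norm_inv]
  exact inv_anti₀ hε (hz μ hμ)

lemma spectrum_add_subset_thickening (a : A) [IsStarNormal a] (s : A) {ε : ℝ}
    (hs : ‖s‖ < ε) : spectrum ℂ (a + s) ⊆ thickening ε (spectrum ℂ a) := by
  nontriviality A
  intro z hz
  by_contra hfar
  have hε : 0 < ε := (norm_nonneg s).trans_lt hs
  have hdist : ∀ μ ∈ spectrum ℂ a, ε ≤ ‖z - μ‖ := by
    simpa [mem_thickening_iff, dist_eq_norm] using hfar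
  have hz_res : z ∈ resolventSet ℂ a := by
    by_contra hz'
    simpa using hε.trans_le (hdist z hz')
  set u := hz_res.unit
  have hu : ‖(↑u⁻¹ : A)‖ ≤ ε⁻¹ := spectrum.resolvent_eq hz_res ▸ norm_resolvent_le hε hdist
  have hclose : ‖(algebraMap ℂ A z - (a + s)) - u‖ < ‖(↑u⁻¹ : A)‖⁻¹ := calc
    ‖(algebraMap ℂ A z - (a + s)) - u‖ = ‖s‖ := by
      rw [hz_res.unit_spec, sub_sub_sub_cancel_left, norm_sub_rev, add_sub_cancel_left]
    _ < ε := hs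
    _ ≤ ‖(↑u⁻¹ : A)‖⁻¹ := by
      rw [le_inv_comm₀ hε (norm_pos_iff.2 u⁻¹.ne_zero)]
      exact hu
  exact hz (Units.ofNearby u _ hclose).isUnit

end NormalPerturbation

section Thickening

variable {E : Type*} [SeminormedAddCommGroup E]

lemma exists_abs_norm_sub_norm_lt_of_mem_thickening {s : Set E} {ε : ℝ} {x : E}
    (hx : x ∈ thickening ε s) : ∃ y ∈ s, |‖x‖ - ‖y‖| < ε := by
  obtain ⟨y, hy, hxy⟩ := mem_thickening_iff.1 hx
  exact ⟨y, hy, (abs_norm_sub_norm_le x y).trans_lt (dist_eq_norm x y ▸ hxy)⟩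

lemma thickening_setOf_norm_eq_subset (ρ ε : ℝ) :
    thickening ε {x : E | ‖x‖ = ρ} ⊆ {x | ρ - ε < ‖x‖ ∧ ‖x‖ < ρ + ε} := fun x hx ↦ by
  obtain ⟨y, rfl, hxy⟩ := exists_abs_norm_sub_norm_lt_of_mem_thickening hx
  constructor <;> linarith [abs_lt.1 hxy]

lemma thickening_setOf_norm_le_subset (ρ ε : ℝ) :
    thickening ε {x : E | ‖x‖ ≤ ρ} ⊆ {x | ‖x‖ < ρ + ε} := fun x hx ↦ by
  obtain ⟨y, hy : ‖y‖ ≤ ρ, hxy⟩ := exists_abs_norm_sub_norm_lt_of_mem_thickening hx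
  show ‖x‖ < ρ + ε
  linarith [abs_lt.1 hxy]

end Thickening

theorem spectral_splitting_of_perturbed_normal_general
    {H : Type*} [NormedAddCommGroup H] [InnerProductSpace ℂ H] [CompleteSpace H]
    (N S : H →L[ℂ] H)
    (hN : ContinuousLinearMap.adjoint N * N = N * ContinuousLinearMap.adjoint N)
    (r : ℝ) (hr1 : r < 1)
    (hspec : spectrum ℂ N ⊆ { z : ℂ | ‖z‖ = 1 } ∪ { z : ℂ | ‖z‖ ≤ r })
    (hS : ‖S‖ < (1 - r) / 4) :
    ∃ σ₀ σ₁ : Set ℂ,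
      spectrum ℂ (N + S) = σ₀ ∪ σ₁ ∧
      σ₀ ∩ σ₁ = ∅ ∧
      σ₀ ⊆ { z : ℂ | 1 - (1 - r) / 4 < ‖z‖ ∧ ‖z‖ < 1 + (1 - r) / 4 } ∧
      σ₁ ⊆ { z : ℂ | ‖z‖ < r + (1 - r) / 4 } ∧
      { z : ℂ | 1 - (1 - r) / 4 < ‖z‖ ∧ ‖z‖ < 1 + (1 - r) / 4 } ∩
        { z : ℂ | ‖z‖ < r + (1 - r) / 4 } = ∅ := by
  set ε := (1 - r) / 4 with hε
  set annulus := { z : ℂ | 1 - ε < ‖z‖ ∧ ‖z‖ < 1 + ε }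
  set disk := { z : ℂ | ‖z‖ < r + ε }
  have : IsStarNormal N := ⟨hN⟩
  have hsplit : spectrum ℂ (N + S) ⊆ annulus ∪ disk := calc
    spectrum ℂ (N + S) ⊆ thickening ε (spectrum ℂ N) := spectrum_add_subset_thickening N S hS
    _ ⊆ thickening ε { z : ℂ | ‖z‖ = 1 } ∪ thickening ε { z : ℂ | ‖z‖ ≤ r } :=
      (thickening_subset_of_subset ε hspec).trans (thickening_union ε _ _).le
    _ ⊆ annulus ∪ disk :=
      Set.union_subset_union (thickening_setOf_norm_eq_subset 1 ε)
        (thickening_setOf_norm_le_subset r ε)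
  have hdisjoint : annulus ∩ disk = ∅ :=
    Set.eq_empty_of_forall_notMem fun z ⟨⟨hz, _⟩, (hz' : ‖z‖ < r + ε)⟩ ↦ by
      linarith
  refine ⟨spectrum ℂ (N + S) ∩ annulus, spectrum ℂ (N + S) ∩ disk, ?_, ?_,
    Set.inter_subset_right, Set.inter_subset_right, hdisjoint⟩
  · rw [← Set.inter_union_distrib_left, Set.inter_eq_self_of_subset_left hsplit]
  · rw [Set.inter_inter_inter_comm, hdisjoint, Set.inter_empty]

/-- spectral splitting of Proposition 3.1.
If `N` is normal with spectrum contained in the unit circle together with the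
disk of radius `r < 1`, and `‖S‖ < (1-r)/4`, then the spectrum of `N + S`
splits into two disjoint parts, one localized in a thin annulus around the
unit circle and the other in a disk of radius `r + (1-r)/4`; moreover the two
localization regions are themselves disjoint. -/
theorem spectral_splitting_of_perturbed_normal
    {H : Type*} [NormedAddCommGroup H] [InnerProductSpace ℂ H] [CompleteSpace H]
    (N S : H →L[ℂ] H)
    (hN : ContinuousLinearMap.adjoint N * N = N * ContinuousLinearMap.adjoint N)
    (r : ℝ) (hr0 : 0 ≤ r) (hr1 : r < 1)
    (hspec : spectrum ℂ N ⊆ { z : ℂ | ‖z‖ = 1 } ∪ { z : ℂ | ‖z‖ ≤ r })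
    (hS : ‖S‖ < (1 - r) / 4) :
    ∃ σ₀ σ₁ : Set ℂ,
      spectrum ℂ (N + S) = σ₀ ∪ σ₁ ∧
      σ₀ ∩ σ₁ = ∅ ∧
      σ₀ ⊆ { z : ℂ | 1 - (1 - r) / 4 < ‖z‖ ∧ ‖z‖ < 1 + (1 - r) / 4 } ∧
      σ₁ ⊆ { z : ℂ | ‖z‖ < r + (1 - r) / 4 } ∧
      { z : ℂ | 1 - (1 - r) / 4 < ‖z‖ ∧ ‖z‖ < 1 + (1 - r) / 4 } ∩
        { z : ℂ | ‖z‖ < r + (1 - r) / 4 } = ∅ :=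
  spectral_splitting_of_perturbed_normal_general N S hN r hr1 hspec hS
end
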